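/- arXiv:1505.03768 — 4 statements merged into one kernel-verified Lean document; each statement's English description precedes it below -/
import Mathlib

section
/- Let β be a real number with 0 ≤ β ≤ 1 and let 0 < x < 1/2. Then 1 - βx + 2^{1-β}β(β-1)x² ≤ (1-x)^β ≤ 1 - βx. -/
/-!
The upper bound is Bernoulli's inequality for exponents in `[0, 1]`. For the lower bound, the
second derivative of `t ↦ (1 - t) ^ β` is `β (β - 1) (1 - t) ^ (β - 2) ≥ 2 ^ (2 - β) β (β - 1)`
on `[0, 1/2]`, so adding `2 ^ (1 - β) β (1 - β) t²` and `β t` produces a function that is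
monotone on `[0, 1/2]`; comparing its values at `0` and `x` gives the claim. The derivative
bound itself comes from Bernoulli's inequality with exponent `2 - β ≥ 1`.
-/

open Real Set

lemma rpow_sub_one_sub_one_le {p u : ℝ} (hp : p ≤ 1) (hu : 0 < u) :
    u ^ (p - 1) - 1 ≤ (1 - p) * u ^ (p - 2) * (1 - u) := by
  have bernoulli : (2 - p) * u - (1 - p) ≤ u ^ (2 - p) := by
    have := one_add_mul_self_le_rpow_one_add (s := u - 1) (by linarith) (p := 2 - p)
      (by linarith)
    rw [add_sub_cancel] at this
    linarith
  have hpos : 0 < u ^ (p - 2) := rpow_pos_of_pos hu _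
  have hsplit : u ^ (p - 1) = u * u ^ (p - 2) := by
    rw [show p - 1 = 1 + (p - 2) by ring, rpow_add hu, rpow_one]
  have hinv : u ^ (2 - p) * u ^ (p - 2) = 1 := by
    rw [← rpow_add hu]; norm_num
  rw [hsplit]
  nlinarith [mul_le_mul_of_nonneg_right bernoulli hpos.le]

lemma rpow_sub_one_le_one_add_of_le {p a u : ℝ} (hp : p ≤ 1) (ha : 0 < a) (hau : a ≤ u)
    (hu : u ≤ 1) : u ^ (p - 1) ≤ 1 + (1 - p) * a ^ (p - 2) * (1 - u) := by
  have hmono : u ^ (p - 2) ≤ a ^ (p - 2) := rpow_le_rpow_of_nonpos ha hau (by linarith)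
  have hscale : (1 - p) * u ^ (p - 2) * (1 - u) ≤ (1 - p) * a ^ (p - 2) * (1 - u) :=
    mul_le_mul_of_nonneg_right (mul_le_mul_of_nonneg_left hmono (by linarith)) (by linarith)
  linarith [rpow_sub_one_sub_one_le hp (ha.trans_le hau)]

lemma half_rpow_sub_two (p : ℝ) : (1 / 2 : ℝ) ^ (p - 2) = 2 * 2 ^ (1 - p) := by
  rw [one_div, inv_rpow zero_le_two, ← rpow_neg zero_le_two,
    show -(p - 2) = 1 + (1 - p) by ring, rpow_add two_pos, rpow_one]

lemma monotoneOn_one_sub_rpow_add_mul_add_mul_sq {β : ℝ} (hβ0 : 0 ≤ β) (hβ1 : β ≤ 1) :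
    MonotoneOn (fun t : ℝ => (1 - t) ^ β + β * t + 2 ^ (1 - β) * β * (1 - β) * t ^ 2)
      (Icc 0 (1 / 2)) := by
  set c : ℝ := 2 ^ (1 - β) * β * (1 - β)
  have hderiv : ∀ t < 1, HasDerivAt (fun t : ℝ => (1 - t) ^ β + β * t + c * t ^ 2)
      (-1 * β * (1 - t) ^ (β - 1) + β + c * (2 * t)) t := fun t ht =>
    ((((hasDerivAt_id t).const_sub 1).rpow_const (Or.inl (by simp; linarith))).add
      ((hasDerivAt_id t).const_mul β |>.congr_deriv (mul_one β))).add
      ((hasDerivAt_pow 2 t).const_mul c |>.congr_deriv (by simp))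
  have hcont : Continuous fun t : ℝ => (1 - t) ^ β + β * t + c * t ^ 2 := by
    have : Continuous fun t : ℝ => (1 - t) ^ β :=
      (continuous_const.sub continuous_id).rpow_const fun _ => Or.inr hβ0
    fun_prop
  refine monotoneOn_of_hasDerivWithinAt_nonneg (convex_Icc 0 (1 / 2)) hcont.continuousOn
    (fun t ht => (hderiv t ?_).hasDerivWithinAt) fun t ht => ?_
  all_goals rw [interior_Icc] at ht; obtain ⟨ht0, ht1⟩ := ht
  · linarith
  have hkey := rpow_sub_one_le_one_add_of_le hβ1 one_half_pos (a := 1 / 2) (u := 1 - t)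
    (by linarith) (by linarith)
  rw [half_rpow_sub_two, sub_sub_cancel] at hkey
  nlinarith [mul_le_mul_of_nonneg_left hkey hβ0]

theorem rpow_one_sub_bounds_beta_in_unit (β x : ℝ) (hβ0 : 0 ≤ β) (hβ1 : β ≤ 1)
    (hx0 : 0 < x) (hx1 : x < 1 / 2) :
    1 - β * x + 2 ^ (1 - β) * β * (β - 1) * x ^ 2 ≤ (1 - x) ^ β ∧
    (1 - x) ^ β ≤ 1 - β * x := by
  constructor
  · have := monotoneOn_one_sub_rpow_add_mul_add_mul_sq hβ0 hβ1
      (left_mem_Icc.2 one_half_pos.le) ⟨hx0.le, hx1.le⟩ hx0.le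
    simp only [sub_zero, one_rpow, mul_zero, add_zero, ne_eq, OfNat.ofNat_ne_zero,
      not_false_eq_true, zero_pow] at this
    linarith
  · have := rpow_one_add_le_one_add_mul_self (s := -x) (by linarith) hβ0 hβ1
    rw [← sub_eq_add_neg] at this
    linarith
end

section
/- Let β be a real number with β < 0 or 1 ≤ β ≤ 2, and let 0 < x < 1/2. Then 1 - βx ≤ (1-x)^β ≤ 1 - βx + 2^{1-β}β(β-1)x². -/
/-!
Both bounds are second-order Taylor estimates at `0` for `y ↦ (1 - y) ^ β`, whose second
derivative is `β (β - 1) (1 - y) ^ (β - 2)`. This is nonnegative because `β (β - 1) ≥ 0`, so the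
function lies above its tangent line. On `[0, 1/2]` it is also at most `β (β - 1) 2 ^ (2 - β)`,
because `β - 2 ≤ 0` and `1 - y ≥ 1/2`; hence the function lies below the tangent parabola with
that curvature.
-/

open Set Real

theorem add_mul_sub_le_of_hasDerivAt2_nonneg {f f' f'' : ℝ → ℝ} {a b : ℝ} (hab : a ≤ b)
    (hf : ∀ y ∈ Icc a b, HasDerivAt f (f' y) y) (hf' : ∀ y ∈ Ioo a b, HasDerivAt f' (f'' y) y)
    (hf'' : ∀ y ∈ Ioo a b, 0 ≤ f'' y) :
    f a + f' a * (b - a) ≤ f b := by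
  rcases hab.eq_or_lt with rfl | hab
  · simp
  have hconv : ConvexOn ℝ (Icc a b) f := by
    refine convexOn_of_hasDerivWithinAt2_nonneg (f' := f') (f'' := f'') (convex_Icc a b)
      (fun y hy => (hf y hy).continuousAt.continuousWithinAt) ?_ ?_ ?_ <;> rw [interior_Icc]
    · exact fun y hy => (hf y (Ioo_subset_Icc_self hy)).hasDerivWithinAt
    · exact fun y hy => (hf' y hy).hasDerivWithinAt
    · exact hf''
  have hslope := hconv.le_slope_of_hasDerivAt (left_mem_Icc.2 hab.le) (right_mem_Icc.2 hab.le)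
    hab (hf a (left_mem_Icc.2 hab.le))
  rw [slope_def_field, le_div_iff₀ (sub_pos.2 hab)] at hslope
  linarith

theorem hasDerivAt_one_sub_rpow (p : ℝ) {y : ℝ} (hy : y < 1) :
    HasDerivAt (fun z => (1 - z) ^ p) (-p * (1 - y) ^ (p - 1)) y :=
  (((hasDerivAt_id' y).const_sub 1).rpow_const (Or.inl (sub_ne_zero.2 hy.ne'))).congr_deriv
    (by ring)

theorem hasDerivAt_neg_mul_one_sub_rpow (p : ℝ) {y : ℝ} (hy : y < 1) :
    HasDerivAt (fun z => -p * (1 - z) ^ (p - 1)) (p * (p - 1) * (1 - y) ^ (p - 2)) y := by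
  refine ((hasDerivAt_one_sub_rpow (p - 1) hy).const_mul (-p)).congr_deriv ?_
  rw [sub_sub, one_add_one_eq_two]
  ring

theorem one_sub_rpow_le_two_rpow_neg {y p : ℝ} (hy : y ≤ 1 / 2) (hp : p ≤ 0) :
    (1 - y) ^ p ≤ 2 ^ (-p) :=
  calc (1 - y) ^ p ≤ (1 / 2) ^ p := rpow_le_rpow_of_nonpos (by norm_num) (by linarith) hp
    _ = 2 ^ (-p) := by rw [one_div, inv_rpow zero_le_two, rpow_neg zero_le_two]

theorem one_sub_mul_le_one_sub_rpow {β x : ℝ} (hβ : 0 ≤ β * (β - 1)) (hx0 : 0 ≤ x)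
    (hx1 : x < 1) : 1 - β * x ≤ (1 - x) ^ β := by
  have h := add_mul_sub_le_of_hasDerivAt2_nonneg hx0
    (fun y hy => hasDerivAt_one_sub_rpow β (hy.2.trans_lt hx1))
    (fun y hy => hasDerivAt_neg_mul_one_sub_rpow β (hy.2.trans hx1))
    (fun y hy => mul_nonneg hβ (rpow_nonneg (by linarith [hy.2]) _))
  simpa [sub_eq_add_neg] using h

theorem one_sub_rpow_le_one_sub_mul_add {β x : ℝ} (hβ : 0 ≤ β * (β - 1)) (hβ2 : β ≤ 2)
    (hx0 : 0 ≤ x) (hx1 : x ≤ 1 / 2) :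
    (1 - x) ^ β ≤ 1 - β * x + 2 ^ (1 - β) * β * (β - 1) * x ^ 2 := by
  set c := 2 ^ (1 - β) * β * (β - 1)
  have hf : ∀ y < 1, HasDerivAt (fun y => 1 - β * y + c * y ^ 2 - (1 - y) ^ β)
      (-β + 2 * c * y + β * (1 - y) ^ (β - 1)) y := fun y hy => by
    refine ((((hasDerivAt_id' y).const_mul β).const_sub 1).add
      ((hasDerivAt_pow 2 y).const_mul c)).sub (hasDerivAt_one_sub_rpow β hy) |>.congr_deriv ?_
    push_cast
    ring
  have hf' : ∀ y < 1, HasDerivAt (fun y => -β + 2 * c * y + β * (1 - y) ^ (β - 1))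
      (2 * c - β * (β - 1) * (1 - y) ^ (β - 2)) y := fun y hy => by
    refine ((((hasDerivAt_id' y).const_mul (2 * c)).const_add (-β)).sub
      (hasDerivAt_neg_mul_one_sub_rpow β hy)).congr_of_eventuallyEq
      (.of_forall fun z => by simp only [Pi.sub_apply]; ring) |>.congr_deriv (by ring)
  have hcurv : ∀ y ≤ 1 / 2, β * (β - 1) * (1 - y) ^ (β - 2) ≤ 2 * c := fun y hy =>
    calc β * (β - 1) * (1 - y) ^ (β - 2) ≤ β * (β - 1) * 2 ^ (-(β - 2)) :=
          mul_le_mul_of_nonneg_left (one_sub_rpow_le_two_rpow_neg hy (by linarith)) hβ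
      _ = 2 * c := by
          rw [show -(β - 2) = 1 + (1 - β) by ring, rpow_add two_pos, rpow_one]
          ring
  have h := add_mul_sub_le_of_hasDerivAt2_nonneg hx0
    (fun y hy => hf y (by linarith [hy.2]))
    (fun y hy => hf' y (by linarith [hy.2]))
    (fun y hy => sub_nonneg.2 (hcurv y (by linarith [hy.2])))
  simp only [mul_zero, sub_zero, zero_pow two_ne_zero, add_zero, one_rpow, mul_one] at h
  linarith

theorem rpow_one_sub_bounds_beta_neg_or_one_two (β x : ℝ)
    (hβ : β < 0 ∨ (1 ≤ β ∧ β ≤ 2)) (hx0 : 0 < x) (hx1 : x < 1 / 2) :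
    1 - β * x ≤ (1 - x) ^ β ∧
    (1 - x) ^ β ≤ 1 - β * x + 2 ^ (1 - β) * β * (β - 1) * x ^ 2 := by
  have hβ2 : β ≤ 2 := by rcases hβ with h | ⟨_, h⟩ <;> linarith
  have hββ : 0 ≤ β * (β - 1) := by
    rcases hβ with h | ⟨h, _⟩
    · nlinarith
    · exact mul_nonneg (by linarith) (by linarith)
  exact ⟨one_sub_mul_le_one_sub_rpow hββ hx0.le (by linarith),
    one_sub_rpow_le_one_sub_mul_add hββ hβ2 hx0.le hx1.le⟩
end

section
/- Let c : (0,∞) → (0,∞) be regularly varying with index γ > -1, and suppose c is locally integrable on (0,∞) with ∫₀^{t₀} c(s) ds < ∞ for some t₀ > 0. Then lim_{t→∞} t·c(t)/∫_{t₀}^t c(s) ds = γ + 1. -/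
open Filter MeasureTheory Set Real Topology
open scoped Pointwise

/-!
Write `c (exp x) = exp (γ * x + k x)`. Regular variation says that `k (x + u) - k x → 0` for
every `u`; since `k` is measurable, the uniform convergence theorem makes this uniform in
`u ∈ [0, 1]`, so `k` grows sublinearly. This yields the Potter bound
`c s ≤ exp δ * (s / t) ^ (γ - δ) * c t` for `T ≤ s ≤ t`, and we take `δ` with `γ - δ > -1`.
Substituting `s = t * u`, `(∫ s in T..t, c s) / (t * c t) = ∫ u in T/t..1, c (t * u) / c t`,
and dominated convergence with majorant `exp δ * u ^ (γ - δ)` gives the limit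
`∫ u in 0..1, u ^ γ = (γ + 1)⁻¹`. The integral over `[t₀, T]` is negligible because the Potter
bound also forces `t * c t → ∞`.
-/

theorem MeasureTheory.nonempty_inter_of_measure_lt_add₀ {α : Type*} [MeasurableSpace α]
    (μ : Measure α) {s t u : Set α} (hs : NullMeasurableSet s μ) (hsu : s ⊆ u) (htu : t ⊆ u)
    (h : μ u < μ s + μ t) : (s ∩ t).Nonempty := by
  obtain ⟨s', hs's, hs', hs'_ae⟩ := hs.exists_measurable_subset_ae_eq
  rw [← measure_congr hs'_ae] at h
  exact (nonempty_inter_of_measure_lt_add' μ hs' (hs's.trans hsu) htu h).mono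
    (inter_subset_inter_left _ hs's)

theorem MeasureTheory.eventually_lt_measure_inter_iInter_ge {α : Type*} [MeasurableSpace α]
    (μ : Measure α) {f : ℕ → α → ℝ} {s : Set α}
    (hf : ∀ v ∈ s, Tendsto (fun m => f m v) atTop (𝓝 0)) {ε : ℝ} (hε : 0 < ε)
    {r : ENNReal} (hr : r < μ s) :
    ∀ᶠ n in atTop, r < μ (s ∩ ⋂ m ≥ n, {v | |f m v| < ε}) := by
  have hmono : Monotone fun n => s ∩ ⋂ m ≥ n, {v | |f m v| < ε} := fun n n' hn =>
    inter_subset_inter_right _ (biInter_mono (fun m hm => hn.trans hm) fun _ _ => subset_rfl)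
  have hcover : (⋃ n, s ∩ ⋂ m ≥ n, {v | |f m v| < ε}) = s := by
    refine subset_antisymm (iUnion_subset fun n => inter_subset_left) fun v hv => ?_
    obtain ⟨n, hn⟩ := eventually_atTop.1 ((hf v hv).eventually (Metric.ball_mem_nhds 0 hε))
    exact mem_iUnion.2 ⟨n, hv, mem_iInter₂.2 fun m hm => by simpa using hn m hm⟩
  rw [← hcover] at hr
  exact (tendsto_measure_iUnion_atTop hmono).eventually_const_lt hr

theorem Real.quasiMeasurePreserving_exp : Measure.QuasiMeasurePreserving exp volume volume := by
  refine ⟨measurable_exp, Measure.AbsolutelyContinuous.mk fun s hs h0 => ?_⟩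
  rw [Measure.map_apply measurable_exp hs]
  refine measure_mono_null (t := log '' (s ∩ Ioi 0))
    (fun x hx => ⟨exp x, ⟨hx, exp_pos x⟩, log_exp x⟩)
    (addHaar_image_eq_zero_of_differentiableOn_of_addHaar_eq_zero volume
      (differentiableOn_log.mono fun y hy => ne_of_gt hy.2)
      (measure_mono_null inter_subset_left h0))

theorem MeasureTheory.AEStronglyMeasurable.comp_of_restrict_Ioi {α : Type*} [MeasurableSpace α]
    {μ : Measure α} {f : ℝ → ℝ} (hf : AEStronglyMeasurable f (volume.restrict (Ioi 0)))
    {g : α → ℝ} (hg : Measure.QuasiMeasurePreserving g μ volume) (hpos : ∀ᵐ x ∂μ, 0 < g x) :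
    AEStronglyMeasurable (fun x => f (g x)) μ :=
  (((aestronglyMeasurable_indicator_iff measurableSet_Ioi).2 hf).comp_quasiMeasurePreserving
    hg).congr (by filter_upwards [hpos] with x hx using indicator_of_mem (mem_Ioi.2 hx) f)

theorem tendstoUniformlyOn_Icc_sub_of_tendsto_sub {k : ℝ → ℝ} (hk : AEMeasurable k)
    (hlim : ∀ u, Tendsto (fun x => k (x + u) - k x) atTop (𝓝 0)) :
    TendstoUniformlyOn (fun x u => k (x + u) - k x) 0 atTop (Icc 0 1) := by
  rw [Metric.tendstoUniformlyOn_iff]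
  intro ε hε
  by_contra hfreq
  obtain ⟨x, hx, hbad⟩ : ∃ x : ℕ → ℝ, (∀ n : ℕ, (n : ℝ) ≤ x n) ∧
      ∀ n, ∃ u ∈ Icc (0 : ℝ) 1, ε ≤ |k (x n + u) - k (x n)| := by
    choose x hx hbad using fun n : ℕ => frequently_atTop.1 (not_eventually.1 hfreq) n
    refine ⟨x, hx, fun n => ?_⟩
    push Not at hbad
    simpa [Real.dist_eq, abs_sub_comm] using hbad n
  choose u hu hbad using hbad
  /- The sets `E x n` and `u n +ᵥ E (x + u) n` fill more than half of `[0, 3]` for large `n`, so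
  they meet at some `w`; comparing both with `k (x n + w)` contradicts the choice of `u n`. -/
  set E : (ℕ → ℝ) → ℕ → Set ℝ := fun y n =>
    Icc 0 2 ∩ ⋂ m ≥ n, {v | |k (y m + v) - k (y m)| < ε / 2}
  have hE : ∀ y : ℕ → ℝ, Tendsto y atTop atTop →
      ∀ᶠ n in atTop, ENNReal.ofReal (3 / 2) < volume (E y n) := fun y hy =>
    eventually_lt_measure_inter_iInter_ge volume (fun v _ => (hlim v).comp hy) (half_pos hε)
      (by rw [Real.volume_Icc, ENNReal.ofReal_lt_ofReal_iff] <;> norm_num)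
  have hx_top : Tendsto x atTop atTop := tendsto_atTop_mono hx tendsto_natCast_atTop_atTop
  obtain ⟨n, hAn, hBn⟩ := ((hE x hx_top).and
    (hE _ (tendsto_atTop_add_right_of_le _ 0 hx_top fun m => (hu m).1))).exists
  have hA : NullMeasurableSet (E x n) volume := by
    refine measurableSet_Icc.nullMeasurableSet.inter (.iInter fun m => .iInter fun _ => ?_)
    have hshift : AEMeasurable (fun v => k (x m + v)) := hk.comp_quasiMeasurePreserving
      (measurePreserving_add_left volume (x m)).quasiMeasurePreserving
    exact (continuous_abs.measurable.comp_aemeasurable (hshift.sub_const _)).nullMeasurable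
      measurableSet_Iio
  have hAsub : E x n ⊆ Icc 0 3 := fun v hv => ⟨hv.1.1, by linarith [hv.1.2]⟩
  have hBsub : u n +ᵥ E (fun m => x m + u m) n ⊆ Icc 0 3 := by
    rintro _ ⟨v, hv, rfl⟩
    exact ⟨by simp [add_nonneg (hu n).1 hv.1.1], by simp; linarith [(hu n).2, hv.1.2]⟩
  obtain ⟨_, hwA, v, hvB, rfl⟩ := nonempty_inter_of_measure_lt_add₀ volume hA hAsub hBsub <| by
    rw [measure_vadd, Real.volume_Icc, sub_zero,
      show (3 : ℝ) = 3 / 2 + 3 / 2 by norm_num, ENNReal.ofReal_add (by norm_num) (by norm_num)]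
    exact ENNReal.add_lt_add hAn hBn
  have h₁ := mem_iInter₂.1 hwA.2 n le_rfl
  have h₂ := mem_iInter₂.1 hvB.2 n le_rfl
  simp only [mem_ofPred_eq, vadd_eq_add, ← add_assoc] at h₁ h₂
  rcases le_abs'.1 (hbad n) with h | h <;>
    linarith [(abs_lt.1 h₁).1, (abs_lt.1 h₁).2, (abs_lt.1 h₂).1, (abs_lt.1 h₂).2]

theorem abs_sub_le_mul_add_one_of_forall_mem_Icc {k : ℝ → ℝ} {X δ : ℝ}
    (h : ∀ x ≥ X, ∀ u ∈ Icc (0 : ℝ) 1, |k (x + u) - k x| ≤ δ) {x u : ℝ} (hx : X ≤ x)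
    (hu : 0 ≤ u) : |k (x + u) - k x| ≤ δ * (u + 1) := by
  obtain ⟨n, hn⟩ := exists_nat_ge u
  induction n generalizing x u with
  | zero => simpa [le_antisymm (Nat.cast_zero (R := ℝ) ▸ hn) hu] using h x hx 0 (by simp)
  | succ n ih =>
    have hδ : 0 ≤ δ := (abs_nonneg _).trans (h x hx 0 (by simp))
    rcases le_or_gt u 1 with hu1 | hu1
    · exact (h x hx u ⟨hu, hu1⟩).trans (by nlinarith)
    · have hstep := ih (x := x + 1) (u := u - 1) (by linarith) (by linarith)
        (by push_cast at hn; linarith)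
      rw [show x + 1 + (u - 1) = x + u by ring] at hstep
      calc |k (x + u) - k x| ≤ |k (x + u) - k (x + 1)| + |k (x + 1) - k x| := abs_sub_le _ _ _
        _ ≤ δ * (u - 1 + 1) + δ := add_le_add hstep (h x hx 1 (by simp))
        _ = δ * (u + 1) := by ring

section RegularVariation

variable {c : ℝ → ℝ} {γ : ℝ}

theorem tendsto_log_comp_exp_sub (hpos : ∀ t, 0 < t → 0 < c t)
    (hrv : ∀ x, 0 < x → Tendsto (fun t => c (t * x) / c t) atTop (𝓝 (x ^ γ))) (u : ℝ) :
    Tendsto (fun x => (log (c (exp (x + u))) - γ * (x + u)) - (log (c (exp x)) - γ * x))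
      atTop (𝓝 0) := by
  have h := ((continuousAt_log (rpow_pos_of_pos (exp_pos u) γ).ne').tendsto.comp
    ((hrv _ (exp_pos u)).comp tendsto_exp_atTop)).sub_const (γ * u)
  rw [log_rpow (exp_pos u), log_exp, mul_comm, sub_self] at h
  refine h.congr fun x => ?_
  simp only [Function.comp_apply, exp_add]
  rw [log_div (hpos _ (by positivity)).ne' (hpos _ (exp_pos x)).ne']
  ring

theorem potter_bound (hpos : ∀ t, 0 < t → 0 < c t)
    (hrv : ∀ x, 0 < x → Tendsto (fun t => c (t * x) / c t) atTop (𝓝 (x ^ γ)))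
    (hmeas : AEStronglyMeasurable c (volume.restrict (Ioi 0))) {δ : ℝ}
    (hδ : 0 < δ) : ∃ T > 0, ∀ s t, T ≤ s → s ≤ t → c s ≤ exp δ * (s / t) ^ (γ - δ) * c t := by
  set k := fun x => log (c (exp x)) - γ * x with hk
  have hk_meas : AEMeasurable k :=
    (measurable_log.comp_aemeasurable (hmeas.comp_of_restrict_Ioi quasiMeasurePreserving_exp
      (ae_of_all _ exp_pos)).aemeasurable).sub (measurable_id.const_mul γ).aemeasurable
  obtain ⟨X, hX⟩ := eventually_atTop.1 (Metric.tendstoUniformlyOn_iff.1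
    (tendstoUniformlyOn_Icc_sub_of_tendsto_sub hk_meas (tendsto_log_comp_exp_sub hpos hrv)) δ hδ)
  have hlin : ∀ x ≥ X, ∀ u ≥ 0, |k (x + u) - k x| ≤ δ * (u + 1) := fun x hx u hu =>
    abs_sub_le_mul_add_one_of_forall_mem_Icc
      (fun x hx u hu => by simpa [Real.dist_eq, abs_sub_comm] using (hX x hx u hu).le) hx hu
  refine ⟨exp X, exp_pos X, fun s t hs hst => ?_⟩
  have hs0 : 0 < s := (exp_pos X).trans_le hs
  have ht0 : 0 < t := hs0.trans_le hst
  have h := hlin (log s) ((le_log_iff_exp_le hs0).2 hs) (log t - log s)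
    (sub_nonneg.2 (log_le_log hs0 hst))
  simp only [hk, add_sub_cancel, exp_log hs0, exp_log ht0] at h
  calc c s = exp (log (c s)) := (exp_log (hpos s hs0)).symm
    _ ≤ exp (δ + log (s / t) * (γ - δ) + log (c t)) := by
      rw [exp_le_exp, log_div hs0.ne' ht0.ne']
      linarith [(abs_le.1 h).1]
    _ = exp δ * (s / t) ^ (γ - δ) * c t := by
      rw [exp_add, exp_add, exp_log (hpos t ht0), ← rpow_def_of_pos (div_pos hs0 ht0)]

end RegularVariation

section Potter

variable {c : ℝ → ℝ} {T C σ : ℝ}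

theorem one_le_of_potter (hpos : ∀ t, 0 < t → 0 < c t) (hT : 0 < T)
    (hbound : ∀ s t, T ≤ s → s ≤ t → c s ≤ C * (s / t) ^ σ * c t) : 1 ≤ C := by
  have h := hbound T T le_rfl le_rfl
  rwa [div_self hT.ne', one_rpow, mul_one, le_mul_iff_one_le_left (hpos T hT)] at h

theorem tendsto_mul_self_atTop_of_potter (hpos : ∀ t, 0 < t → 0 < c t) (hT : 0 < T)
    (hbound : ∀ s t, T ≤ s → s ≤ t → c s ≤ C * (s / t) ^ σ * c t) (hσ : -1 < σ) :
    Tendsto (fun t => t * c t) atTop atTop := by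
  have hC : 0 < C := zero_lt_one.trans_le (one_le_of_potter hpos hT hbound)
  have hK : 0 < c T / (C * T ^ σ) := div_pos (hpos T hT) (mul_pos hC (rpow_pos_of_pos hT σ))
  refine tendsto_atTop_mono' atTop ?_
    ((tendsto_rpow_atTop (by linarith : 0 < 1 + σ)).const_mul_atTop hK)
  filter_upwards [eventually_ge_atTop T] with t ht
  have ht0 : 0 < t := hT.trans_le ht
  have h := hbound T t le_rfl ht
  rw [div_rpow hT.le ht0.le] at h
  rw [rpow_add ht0, rpow_one, div_mul_eq_mul_div,
    div_le_iff₀ (mul_pos hC (rpow_pos_of_pos hT σ))]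
  have htσ := rpow_pos_of_pos ht0 σ
  calc c T * (t * t ^ σ) = t * (c T * t ^ σ) := by ring
    _ ≤ t * (C * (T ^ σ / t ^ σ) * c t * t ^ σ) := by gcongr
    _ = t * c t * (C * T ^ σ) := by field_simp

theorem tendsto_integral_div_mul_self_of_potter {γ : ℝ} (hγ : -1 < γ)
    (hpos : ∀ t, 0 < t → 0 < c t)
    (hrv : ∀ x, 0 < x → Tendsto (fun t => c (t * x) / c t) atTop (𝓝 (x ^ γ)))
    (hmeas : AEStronglyMeasurable c (volume.restrict (Ioi 0))) (hT : 0 < T)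
    (hbound : ∀ s t, T ≤ s → s ≤ t → c s ≤ C * (s / t) ^ σ * c t) (hσ : -1 < σ) :
    Tendsto (fun t => (∫ s in T..t, c s) / (t * c t)) atTop (𝓝 (γ + 1)⁻¹) := by
  have hC : 0 ≤ C := zero_le_one.trans (one_le_of_potter hpos hT hbound)
  set F : ℝ → ℝ → ℝ := fun t => (Ioc (T / t) 1).indicator fun u => c (t * u) / c t with hF_def
  have hF : Tendsto (fun t => ∫ u in Ioc 0 1, F t u) atTop (𝓝 (∫ u in Ioc 0 1, u ^ γ)) := by
    refine tendsto_integral_filter_of_dominated_convergence (fun u => C * u ^ σ) ?_ ?_ ?_ ?_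
    · filter_upwards [eventually_gt_atTop 0] with t ht
      have hcomp : AEStronglyMeasurable (fun u => c (t * u)) (volume.restrict (Ioc 0 1)) :=
        hmeas.comp_of_restrict_Ioi ((Measure.quasiMeasurePreserving_smul volume ht.ne').mono_left
          Measure.absolutelyContinuous_restrict)
          ((ae_restrict_mem measurableSet_Ioc).mono fun u hu => mul_pos ht hu.1)
      exact (hcomp.aemeasurable.div_const _).aestronglyMeasurable.indicator measurableSet_Ioc
    · filter_upwards [eventually_ge_atTop T] with t ht
      filter_upwards [ae_restrict_mem measurableSet_Ioc] with u hu
      by_cases hmem : u ∈ Ioc (T / t) 1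
      · have ht0 : 0 < t := hT.trans_le ht
        have h := hbound (t * u) t ((div_lt_iff₀' ht0).1 hmem.1).le
          (mul_le_of_le_one_right ht0.le hmem.2)
        rw [mul_div_cancel_left₀ u ht0.ne'] at h
        simp only [hF_def, indicator_of_mem hmem]
        rwa [norm_of_nonneg (div_pos (hpos _ (mul_pos ht0 hu.1)) (hpos t ht0)).le,
          div_le_iff₀ (hpos t ht0)]
      · simp only [hF_def, indicator_of_notMem hmem, norm_zero]
        exact mul_nonneg hC (rpow_nonneg hu.1.le σ)
    · exact (intervalIntegral.intervalIntegrable_rpow' hσ).1.const_mul C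
    · filter_upwards [ae_restrict_mem measurableSet_Ioc] with u hu
      refine (hrv u hu.1).congr' ?_
      filter_upwards [eventually_gt_atTop (T / u)] with t ht
      have ht0 : 0 < t := (div_pos hT hu.1).trans ht
      have hmem : u ∈ Ioc (T / t) 1 :=
        ⟨(div_lt_iff₀ ht0).2 (by rwa [div_lt_iff₀ hu.1, mul_comm] at ht), hu.2⟩
      simp only [hF_def, indicator_of_mem hmem]
  have hval : ∫ u in Ioc (0 : ℝ) 1, u ^ γ = (γ + 1)⁻¹ := by
    rw [← intervalIntegral.integral_of_le zero_le_one, integral_rpow (Or.inl hγ), one_rpow,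
      zero_rpow (by linarith), sub_zero, one_div]
  rw [hval] at hF
  refine hF.congr' ?_
  filter_upwards [eventually_ge_atTop T] with t ht
  have ht0 : 0 < t := hT.trans_le ht
  rw [hF_def, setIntegral_indicator measurableSet_Ioc, Ioc_inter_Ioc,
    sup_of_le_right (div_pos hT ht0).le, inf_idem,
    ← intervalIntegral.integral_of_le ((div_le_one ht0).2 ht), intervalIntegral.integral_div,
    intervalIntegral.integral_comp_mul_left (fun s => c s) ht0.ne', smul_eq_mul,
    mul_div_cancel₀ T ht0.ne', mul_one]
  ring

end Potter

theorem karamata_direct_above_general (c : ℝ → ℝ) (γ : ℝ) (hγ : -1 < γ)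
    (hpos : ∀ t : ℝ, 0 < t → 0 < c t)
    (hrv : ∀ x : ℝ, 0 < x → Tendsto (fun t => c (t * x) / c t) atTop (nhds (x ^ γ)))
    (hloc : LocallyIntegrableOn c (Set.Ioi 0))
    (t₀ : ℝ) (ht₀ : 0 < t₀) :
    Tendsto (fun t => t * c t / ∫ s in t₀..t, c s) atTop (nhds (γ + 1)) := by
  have hmeas := hloc.aestronglyMeasurable
  have hσ : -1 < γ - (γ + 1) / 2 := by linarith
  obtain ⟨T, hT, hbound⟩ := potter_bound hpos hrv hmeas (δ := (γ + 1) / 2) (by linarith)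
  have hint : ∀ a b, 0 < a → 0 < b → IntervalIntegrable c volume a b := fun a b ha hb =>
    (hloc.integrableOn_compact_subset (fun x hx => (lt_min ha hb).trans_le hx.1)
      isCompact_uIcc).intervalIntegrable
  have hhead : Tendsto (fun t => (∫ s in t₀..T, c s) / (t * c t)) atTop (𝓝 0) :=
    tendsto_const_nhds.div_atTop (tendsto_mul_self_atTop_of_potter hpos hT hbound hσ)
  have hratio := hhead.add
    (tendsto_integral_div_mul_self_of_potter hγ hpos hrv hmeas hT hbound hσ)
  rw [zero_add] at hratio
  have hinv := hratio.inv₀ (inv_ne_zero (by linarith))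
  rw [inv_inv] at hinv
  refine hinv.congr' ?_
  filter_upwards [eventually_gt_atTop 0] with t ht
  rw [← add_div, intervalIntegral.integral_add_adjacent_intervals (hint _ _ ht₀ hT)
    (hint _ _ hT ht), inv_div]

theorem karamata_direct_above (c : ℝ → ℝ) (γ : ℝ) (hγ : -1 < γ)
    (hpos : ∀ t : ℝ, 0 < t → 0 < c t)
    (hrv : ∀ x : ℝ, 0 < x → Tendsto (fun t => c (t * x) / c t) atTop (nhds (x ^ γ)))
    (hloc : LocallyIntegrableOn c (Set.Ioi 0))
    (t₀ : ℝ) (ht₀ : 0 < t₀) (hint : IntegrableOn c (Set.Ioc 0 t₀)) :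
    Tendsto (fun t => t * c t / ∫ s in t₀..t, c s) atTop (nhds (γ + 1)) :=
  karamata_direct_above_general c γ hγ hpos hrv hloc t₀ ht₀
end

section
/- Let c : (0,∞) → (0,∞) be regularly varying with index γ < -1. Then ∫_t^∞ c(s) ds < ∞ for large t and lim_{t→∞} t·c(t)/∫_t^∞ c(s) ds = -γ - 1. -/
/-!
Write `c(t) = t^γ ℓ(t)` and `g(u) = log ℓ(e^u)`, so that `g(u + v) - g(u) → 0` for every `v`.
Because `g` is measurable, this convergence is uniform in `v ∈ [0, 1]` (Csiszár–Erdős): the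
functions `x ↦ g(u + x) - g(u)` converge in measure on `[0, 2]`, so for large `u` and any
`v ∈ [0, 1]` some `x ∈ [1, 2]` is good both for `u` and, shifted by `v`, for `u + v`.
Adding up unit steps gives Potter's bound `c(tx) ≤ e^δ c(t) x^(γ+δ)` for `x ≥ 1` and large `t`;
with `γ + δ < -1` it dominates `c(tx)/c(t)` by an integrable power of `x`, so by dominated
convergence `∫_t^∞ c / (t c(t)) = ∫_1^∞ c(tx)/c(t) dx → ∫_1^∞ x^γ dx = 1/(-γ - 1)`.
-/

open Filter MeasureTheory Set Topology

theorem tendstoInMeasure_of_tendsto_ae_of_isCountablyGenerated {α ι E : Type*}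
    [MeasurableSpace α] {μ : Measure α} [IsFiniteMeasure μ] [MetricSpace E]
    {l : Filter ι} [l.IsCountablyGenerated] {f : ι → α → E} {g : α → E}
    (hf : ∀ i, AEStronglyMeasurable (f i) μ)
    (hfg : ∀ᵐ x ∂μ, Tendsto (fun i => f i x) l (𝓝 (g x))) :
    TendstoInMeasure μ f l g := fun ε hε =>
  tendsto_of_seq_tendsto fun ns hns =>
    tendstoInMeasure_of_tendsto_ae (fun n => hf (ns n)) (hfg.mono fun _ hx => hx.comp hns) ε hε

section UniformConvergence

variable {g : ℝ → ℝ}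

theorem eventually_forall_Icc_abs_add_sub_lt (hg : AEMeasurable g)
    (hconv : ∀ v, Tendsto (fun u => g (u + v) - g u) atTop (𝓝 0)) {ε : ℝ} (hε : 0 < ε) :
    ∀ᶠ u in atTop, ∀ v ∈ Icc (0 : ℝ) 1, |g (u + v) - g u| < ε := by
  set bad : ℝ → Set ℝ := fun u => {x | ε / 2 ≤ |g (u + x) - g u|} ∩ Icc 0 2
  have hmeas : TendstoInMeasure (volume.restrict (Icc 0 2)) (fun u x => g (u + x) - g u) atTop 0 :=
    tendstoInMeasure_of_tendsto_ae_of_isCountablyGenerated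
      (fun u => (((hg.comp_quasiMeasurePreserving
        (measurePreserving_add_left volume u).quasiMeasurePreserving).sub_const
          (g u)).aestronglyMeasurable).restrict)
      (ae_of_all _ hconv)
  have hsmall : ∀ᶠ u in atTop, volume (bad u) < 1 / 2 := by
    have := tendstoInMeasure_iff_norm.1 hmeas (ε / 2) (half_pos hε)
    simp only [Pi.zero_apply, sub_zero, Real.norm_eq_abs,
      Measure.restrict_apply' measurableSet_Icc] at this
    exact this.eventually (gt_mem_nhds (by norm_num))
  obtain ⟨U, hU⟩ := hsmall.exists_forall_of_atTop
  filter_upwards [eventually_ge_atTop U] with u hu v hv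
  obtain ⟨x, hx, hxu, hxuv⟩ : ∃ x ∈ Icc (1 : ℝ) 2, x ∉ bad u ∧ x - v ∉ bad (u + v) := by
    by_contra! hcover
    have hsub : Icc (1 : ℝ) 2 ⊆ bad u ∪ (· + -v) ⁻¹' bad (u + v) := fun x hx =>
      (em (x ∈ bad u)).elim Or.inl fun h => Or.inr (hcover x hx h)
    have := (measure_mono (μ := volume) hsub).trans (measure_union_le _ _)
    rw [measure_preimage_add_right, Real.volume_Icc] at this
    have := this.trans_lt <|
      ENNReal.add_lt_add (hU u hu) (hU (u + v) (hu.trans (le_add_of_nonneg_right hv.1)))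
    rw [ENNReal.add_halves] at this
    norm_num at this
  have hx₀ : x ∈ Icc (0 : ℝ) 2 := ⟨by linarith [hx.1], hx.2⟩
  have hxv : x - v ∈ Icc (0 : ℝ) 2 := ⟨by linarith [hx.1, hv.2], by linarith [hx.2, hv.1]⟩
  have h₁ : |g (u + x) - g u| < ε / 2 := lt_of_not_ge fun h => hxu ⟨h, hx₀⟩
  have h₂ : |g (u + x) - g (u + v)| < ε / 2 := lt_of_not_ge fun h =>
    hxuv ⟨show ε / 2 ≤ |g (u + v + (x - v)) - g (u + v)| by rwa [add_add_sub_cancel], hxv⟩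
  calc |g (u + v) - g u| = |(g (u + x) - g u) - (g (u + x) - g (u + v))| := by ring_nf
    _ ≤ |g (u + x) - g u| + |g (u + x) - g (u + v)| := abs_sub _ _
    _ < ε / 2 + ε / 2 := add_lt_add h₁ h₂
    _ = ε := add_halves ε

theorem add_sub_le_mul_add_one_of_forall_Icc {U ε : ℝ} (hε : 0 ≤ ε)
    (h : ∀ u ≥ U, ∀ v ∈ Icc (0 : ℝ) 1, g (u + v) - g u ≤ ε) :
    ∀ u ≥ U, ∀ v ≥ 0, g (u + v) - g u ≤ ε * (v + 1) := by
  have hstep : ∀ n : ℕ, ∀ u ≥ U, ∀ v ∈ Icc (0 : ℝ) (n + 1), g (u + v) - g u ≤ ε * (n + 1) := by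
    intro n
    induction n with
    | zero => simpa using h
    | succ n ih =>
      intro u hu v hv
      rcases le_or_gt v 1 with hv1 | hv1
      · have := h u hu v ⟨hv.1, hv1⟩
        push_cast
        nlinarith
      · have h₁ := h u hu 1 ⟨zero_le_one, le_rfl⟩
        have h₂ := ih (u + 1) (by linarith) (v - 1)
          ⟨by linarith, by push_cast at hv; linarith [hv.2]⟩
        rw [add_add_sub_cancel] at h₂
        push_cast
        linarith
  intro u hu v hv
  calc g (u + v) - g u ≤ ε * (⌊v⌋₊ + 1) :=
        hstep ⌊v⌋₊ u hu v ⟨hv, (Nat.lt_floor_add_one v).le⟩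
    _ ≤ ε * (v + 1) := by gcongr; exact Nat.floor_le hv

end UniformConvergence

theorem quasiMeasurePreserving_exp :
    Measure.QuasiMeasurePreserving Real.exp volume (volume.restrict (Ioi 0)) := by
  refine ⟨Real.measurable_exp, Measure.AbsolutelyContinuous.mk fun s hs hs0 => ?_⟩
  rw [Measure.restrict_apply hs] at hs0
  rw [Measure.map_apply Real.measurable_exp hs]
  have : Real.exp ⁻¹' s = Real.log '' (s ∩ Ioi 0) := by
    ext u
    refine ⟨fun hu => ⟨Real.exp u, ⟨hu, Real.exp_pos u⟩, Real.log_exp u⟩, ?_⟩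
    rintro ⟨x, hx, rfl⟩
    simpa [mem_preimage, Real.exp_log hx.2] using hx.1
  rw [this]
  exact addHaar_image_eq_zero_of_differentiableOn_of_addHaar_eq_zero volume
    (fun x hx => (Real.differentiableAt_log hx.2.ne').differentiableWithinAt) hs0

/-- `logSlowPart c γ u = log ℓ(e^u)`, where `c(t) = t^γ ℓ(t)`. -/
noncomputable def logSlowPart (c : ℝ → ℝ) (γ u : ℝ) : ℝ := Real.log (c (Real.exp u)) - γ * u

section RegularVariation

variable {c : ℝ → ℝ} {γ : ℝ}

theorem aemeasurable_logSlowPart (hc : AEMeasurable c (volume.restrict (Ioi 0))) :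
    AEMeasurable (logSlowPart c γ) :=
  (Real.measurable_log.comp_aemeasurable
    (hc.comp_quasiMeasurePreserving quasiMeasurePreserving_exp)).sub
      (measurable_const_mul γ).aemeasurable

theorem logSlowPart_add_sub (hpos : ∀ t : ℝ, 0 < t → 0 < c t) (u v : ℝ) :
    logSlowPart c γ (u + v) - logSlowPart c γ u =
      Real.log (c (Real.exp u * Real.exp v) / c (Real.exp u)) - γ * v := by
  rw [Real.log_div (hpos _ (by positivity)).ne' (hpos _ (Real.exp_pos u)).ne', logSlowPart,
    logSlowPart, Real.exp_add]
  ring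

theorem tendsto_logSlowPart_add_sub (hpos : ∀ t : ℝ, 0 < t → 0 < c t)
    (hrv : ∀ x : ℝ, 0 < x → Tendsto (fun t => c (t * x) / c t) atTop (𝓝 (x ^ γ))) (v : ℝ) :
    Tendsto (fun u => logSlowPart c γ (u + v) - logSlowPart c γ u) atTop (𝓝 0) := by
  have hx : 0 < Real.exp v := Real.exp_pos v
  have hlog := ((Real.continuousAt_log (Real.rpow_pos_of_pos hx γ).ne').tendsto.comp
    ((hrv _ hx).comp Real.tendsto_exp_atTop)).sub_const (γ * v)
  rw [Real.log_rpow hx, Real.log_exp, sub_self] at hlog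
  simpa only [logSlowPart_add_sub hpos, Function.comp_def] using hlog

theorem exists_potter_bound (hpos : ∀ t : ℝ, 0 < t → 0 < c t)
    (hrv : ∀ x : ℝ, 0 < x → Tendsto (fun t => c (t * x) / c t) atTop (𝓝 (x ^ γ)))
    (hc : AEMeasurable c (volume.restrict (Ioi 0))) {δ : ℝ} (hδ : 0 < δ) :
    ∃ T, 0 < T ∧ ∀ t ≥ T, ∀ x ≥ 1, c (t * x) ≤ Real.exp δ * c t * x ^ (γ + δ) := by
  obtain ⟨U, hU⟩ := (eventually_forall_Icc_abs_add_sub_lt (aemeasurable_logSlowPart hc)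
    (tendsto_logSlowPart_add_sub hpos hrv) hδ).exists_forall_of_atTop
  have hgrowth := add_sub_le_mul_add_one_of_forall_Icc hδ.le
    fun u hu v hv => (le_abs_self _).trans (hU u hu v hv).le
  refine ⟨Real.exp U, Real.exp_pos U, fun t ht x hx => ?_⟩
  have ht₀ : 0 < t := (Real.exp_pos U).trans_le ht
  have hx₀ : 0 < x := one_pos.trans_le hx
  have key := hgrowth (Real.log t) ((Real.le_log_iff_exp_le ht₀).2 ht) (Real.log x)
    (Real.log_nonneg hx)
  rw [logSlowPart_add_sub hpos, Real.exp_log ht₀, Real.exp_log hx₀] at key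
  have hct := hpos t ht₀
  calc c (t * x) = c t * Real.exp (Real.log (c (t * x) / c t)) := by
        rw [Real.exp_log (div_pos (hpos _ (mul_pos ht₀ hx₀)) hct)]; field_simp
    _ ≤ c t * Real.exp (Real.log x * (γ + δ) + δ) := by gcongr; linarith
    _ = Real.exp δ * c t * x ^ (γ + δ) := by
        rw [Real.rpow_def_of_pos hx₀, Real.exp_add]; ring

theorem integrableOn_Ioi_of_potter (hpos : ∀ t : ℝ, 0 < t → 0 < c t)
    (hc : AEStronglyMeasurable c (volume.restrict (Ioi 0))) {t C α : ℝ} (ht : 0 < t)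
    (hα : α < -1) (hpotter : ∀ x ≥ 1, c (t * x) ≤ C * c t * x ^ α) :
    IntegrableOn c (Ioi t) := by
  refine Integrable.mono' ((integrableOn_Ioi_rpow_of_lt hα ht).const_mul (C * c t / t ^ α))
    (hc.mono_measure (Measure.restrict_mono (Ioi_subset_Ioi ht.le) le_rfl))
    (ae_restrict_of_forall_mem measurableSet_Ioi fun s (hs : t < s) => ?_)
  have hs₀ : 0 < s := ht.trans hs
  have := hpotter (s / t) ((one_le_div ht).2 hs.le)
  rw [mul_div_cancel₀ s ht.ne', Real.div_rpow hs₀.le ht.le] at this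
  rw [Real.norm_of_nonneg (hpos s hs₀).le]
  calc c s ≤ C * c t * (s ^ α / t ^ α) := this
    _ = C * c t / t ^ α * s ^ α := by ring

theorem tendsto_setIntegral_Ioi_one_div_of_potter (hpos : ∀ t : ℝ, 0 < t → 0 < c t)
    (hrv : ∀ x : ℝ, 0 < x → Tendsto (fun t => c (t * x) / c t) atTop (𝓝 (x ^ γ)))
    {T C α : ℝ} (hT : 0 < T) (hα : α < -1)
    (hpotter : ∀ t ≥ T, ∀ x ≥ 1, c (t * x) ≤ C * c t * x ^ α)
    (hint : ∀ t ≥ T, IntegrableOn c (Ioi t)) :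
    Tendsto (fun t => ∫ x in Ioi 1, c (t * x) / c t) atTop (𝓝 (∫ x in Ioi 1, x ^ γ)) := by
  refine tendsto_integral_filter_of_dominated_convergence (fun x => C * x ^ α) ?_ ?_
    ((integrableOn_Ioi_rpow_of_lt hα one_pos).const_mul C)
    (ae_restrict_of_forall_mem measurableSet_Ioi fun x (hx : 1 < x) => hrv x (one_pos.trans hx))
  · filter_upwards [eventually_ge_atTop T] with t ht
    have := (integrableOn_Ioi_comp_mul_left_iff c 1 (hT.trans_le ht)).2 (by
      rw [mul_one]; exact hint t ht)
    exact (this.div_const (c t)).aestronglyMeasurable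
  · filter_upwards [eventually_ge_atTop T] with t ht
    refine ae_restrict_of_forall_mem measurableSet_Ioi fun x (hx : 1 < x) => ?_
    have ht₀ : 0 < t := hT.trans_le ht
    rw [Real.norm_of_nonneg (div_pos (hpos _ (mul_pos ht₀ (one_pos.trans hx))) (hpos t ht₀)).le,
      div_le_iff₀ (hpos t ht₀)]
    linarith [hpotter t ht x hx.le]

end RegularVariation

theorem setIntegral_Ioi_one_comp_mul_div (c : ℝ → ℝ) {t : ℝ} (ht : 0 < t) :
    ∫ x in Ioi 1, c (t * x) / c t = (∫ s in Ioi t, c s) / (t * c t) := by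
  rw [integral_div, integral_comp_mul_left_Ioi c 1 ht, mul_one, smul_eq_mul, inv_mul_eq_div,
    div_div]

theorem karamata_direct_below (c : ℝ → ℝ) (γ : ℝ) (hγ : γ < -1)
    (hpos : ∀ t : ℝ, 0 < t → 0 < c t)
    (hrv : ∀ x : ℝ, 0 < x → Tendsto (fun t => c (t * x) / c t) atTop (nhds (x ^ γ)))
    (hloc : LocallyIntegrableOn c (Set.Ioi 0)) :
    (∀ᶠ t in atTop, IntegrableOn c (Set.Ioi t)) ∧
    Tendsto (fun t => t * c t / ∫ s in Set.Ioi t, c s) atTop (nhds (-γ - 1)) := by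
  have hc : AEStronglyMeasurable c (volume.restrict (Ioi 0)) := hloc.aestronglyMeasurable
  have hα : γ + (-1 - γ) / 2 < -1 := by linarith
  obtain ⟨T, hT, hpotter⟩ := exists_potter_bound hpos hrv hc.aemeasurable
    (δ := (-1 - γ) / 2) (by linarith)
  have hint : ∀ t ≥ T, IntegrableOn c (Ioi t) := fun t ht =>
    integrableOn_Ioi_of_potter hpos hc (hT.trans_le ht) hα (hpotter t ht)
  refine ⟨eventually_atTop.2 ⟨T, hint⟩, ?_⟩
  have hlim := tendsto_setIntegral_Ioi_one_div_of_potter hpos hrv hT hα hpotter hint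
  rw [integral_Ioi_rpow_of_lt hγ one_pos, Real.one_rpow] at hlim
  have hinv := hlim.inv₀ (div_ne_zero (neg_ne_zero.2 one_ne_zero) (by linarith))
  rw [inv_div, div_neg, div_one, neg_add'] at hinv
  refine hinv.congr' ?_
  filter_upwards [eventually_gt_atTop 0] with t ht
  rw [setIntegral_Ioi_one_comp_mul_div c ht, inv_div]
end
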